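/- (Corollary 4.6(i).) Suppose the convex feasibility problem has no solution (f(x) > 0 for all x ∈ ℝⁿ) and the envelope f is strictly convex. Let {x^k} be any sequence generated by Algorithm 3.1 (for arbitrary M > 0 and x⁰). If {x^k} is bounded and ‖x^{k+1} − x^k‖ → 0 as k → ∞, then f has a (necessarily unique) global minimizer, the sequence {x^k} converges to that minimizer, and f(x^k) → inf{f(x) : x ∈ ℝⁿ}. -/

import Mathlib

open Filter Topology

noncomputable section

abbrev Euc (n : ℕ) := EuclideanSpace ℝ (Fin n)

/-- `ξ` is a subgradient of `g` at `x`. -/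
def IsSubgradAt {n : ℕ} (g : Euc n → ℝ) (x ξ : Euc n) : Prop :=
  ∀ y : Euc n, g x + (inner ℝ ξ (y - x) : ℝ) ≤ g y

/-- The envelope `f(x) = max_i f_i(x)` of finitely many functions. -/
def envl {n m : ℕ} [NeZero m] (f : Fin m → Euc n → ℝ) (x : Euc n) : ℝ :=
  Finset.univ.sup' Finset.univ_nonempty fun i => f i x

/-- The sequence `x` with relaxation parameters `lam` is generated by Algorithm 3.1
with data `M` for the family `f`. -/
def IsAlgSeq {n m : ℕ} [NeZero m] (f : Fin m → Euc n → ℝ) (M : ℝ)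
    (x : ℕ → Euc n) (lam : ℕ → ℝ) : Prop :=
  ∀ k : ℕ, 0 ≤ lam k ∧
    max 0 (envl f (x k)) ≤ lam k * M ^ 2 ∧
    lam k * M ^ 2 ≤ 2 * max 0 (envl f (x k)) ∧
    ∃ (w : Fin m → ℝ) (ξ : Fin m → Euc n),
      (∀ i, 0 ≤ w i) ∧ (∑ i, w i) = 1 ∧
      (∀ i, f i (x k) < envl f (x k) → w i = 0) ∧
      (∀ i, IsSubgradAt (f i) (x k) (ξ i)) ∧
      x (k + 1) = x k - lam k • ∑ i, w i • ξ i

/-!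
Every step of Algorithm 3.1 is a subgradient step `x^{k+1} = x^k - λ_k ν^k` for the envelope,
since a convex combination of subgradients of active functions is a subgradient of `f`.
The lower bound `f(x^k) ≤ λ_k M²` gives `f(x^k) ‖ν^k‖ ≤ M² ‖x^{k+1} - x^k‖`, so along any
subsequence converging to a point `a` (where `f(a) > 0`) the subgradients tend to `0`, and passing
to the limit in the subgradient inequality shows that `a` minimizes `f`. Strict convexity makes the
minimizer unique, so the bounded sequence has a single cluster point and converges to it.
-/

section Envelope

variable {n m : ℕ} [NeZero m] {f : Fin m → Euc n → ℝ}

lemma le_envl (f : Fin m → Euc n → ℝ) (i : Fin m) (p : Euc n) : f i p ≤ envl f p :=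
  Finset.le_sup' (fun i => f i p) (Finset.mem_univ i)

lemma sum_mul_eq_envl_of_active {p : Euc n} {w : Fin m → ℝ} (hw1 : ∑ i, w i = 1)
    (hact : ∀ i, f i p < envl f p → w i = 0) :
    ∑ i, w i * f i p = envl f p := by
  calc ∑ i, w i * f i p = ∑ i, w i * envl f p := by
        refine Finset.sum_congr rfl fun i _ => ?_
        rcases (le_envl f i p).lt_or_eq with h | h
        · simp [hact i h]
        · rw [h]
    _ = envl f p := by rw [← Finset.sum_mul, hw1, one_mul]

lemma isSubgradAt_envl_sum_smul {p : Euc n} {w : Fin m → ℝ} {ξ : Fin m → Euc n}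
    (hw0 : ∀ i, 0 ≤ w i) (hw1 : ∑ i, w i = 1) (hact : ∀ i, f i p < envl f p → w i = 0)
    (hsub : ∀ i, IsSubgradAt (f i) p (ξ i)) :
    IsSubgradAt (envl f) p (∑ i, w i • ξ i) := fun y => by
  calc envl f p + inner ℝ (∑ i, w i • ξ i) (y - p)
      = ∑ i, w i * (f i p + inner ℝ (ξ i) (y - p)) := by
        simp only [sum_inner, real_inner_smul_left, mul_add, Finset.sum_add_distrib,
          sum_mul_eq_envl_of_active hw1 hact]
    _ ≤ ∑ i, w i * envl f y :=
        Finset.sum_le_sum fun i _ =>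
          mul_le_mul_of_nonneg_left ((hsub i y).trans (le_envl f i y)) (hw0 i)
    _ = envl f y := by rw [← Finset.sum_mul, hw1, one_mul]

end Envelope

lemma le_of_tendsto_of_isSubgradAt {n : ℕ} {ι : Type*} {l : Filter ι} [l.NeBot]
    {F : Euc n → ℝ} (hF : Continuous F) {p ν : ι → Euc n} {a : Euc n}
    (hsub : ∀ k, IsSubgradAt F (p k) (ν k)) (hp : Tendsto p l (𝓝 a))
    (hν : Tendsto ν l (𝓝 0)) (y : Euc n) :
    F a ≤ F y := by
  have hlim : Tendsto (fun k => F (p k) + inner ℝ (ν k) (y - p k)) l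
      (𝓝 (F a + inner ℝ (0 : Euc n) (y - a))) :=
    ((hF.tendsto a).comp hp).add (hν.inner (tendsto_const_nhds.sub hp))
  rw [inner_zero_left, add_zero] at hlim
  exact le_of_tendsto' hlim fun k => hsub k y

namespace IsAlgSeq

variable {n m : ℕ} [NeZero m] {f : Fin m → Euc n → ℝ} {M : ℝ} {x : ℕ → Euc n} {lam : ℕ → ℝ}

lemma exists_isSubgradAt_mul_norm_le (halg : IsAlgSeq f M x lam) (k : ℕ) :
    ∃ ν, IsSubgradAt (envl f) (x k) ν ∧
      max 0 (envl f (x k)) * ‖ν‖ ≤ M ^ 2 * ‖x (k + 1) - x k‖ := by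
  obtain ⟨hlam, hlow, -, w, ξ, hw0, hw1, hact, hsub, hstep⟩ := halg k
  refine ⟨∑ i, w i • ξ i, isSubgradAt_envl_sum_smul hw0 hw1 hact hsub, ?_⟩
  rw [hstep, sub_sub_cancel_left, norm_neg, norm_smul, Real.norm_of_nonneg hlam]
  calc max 0 (envl f (x k)) * ‖∑ i, w i • ξ i‖
      ≤ lam k * M ^ 2 * ‖∑ i, w i • ξ i‖ := by gcongr
    _ = M ^ 2 * (lam k * ‖∑ i, w i • ξ i‖) := by ring

lemma isMin_of_mapClusterPt (halg : IsAlgSeq f M x lam) (hF : Continuous (envl f))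
    (hdiff : Tendsto (fun k => ‖x (k + 1) - x k‖) atTop (𝓝 0)) {a : Euc n}
    (ha : MapClusterPt a atTop x) (hpos : 0 < envl f a) (y : Euc n) :
    envl f a ≤ envl f y := by
  obtain ⟨φ, hφ, hxφ⟩ := ha.tendsto_subseq
  choose ν hνsub hνle using halg.exists_isSubgradAt_mul_norm_le
  have hval : Tendsto (fun j => max 0 (envl f (x (φ j)))) atTop (𝓝 (envl f a)) := by
    have h := (tendsto_const_nhds (x := (0 : ℝ))).max ((hF.tendsto a).comp hxφ)
    rwa [max_eq_right hpos.le] at h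
  have hbound : Tendsto (fun j => M ^ 2 * ‖x (φ j + 1) - x (φ j)‖ / max 0 (envl f (x (φ j))))
      atTop (𝓝 0) := by
    have h := ((tendsto_const_nhds (x := M ^ 2)).mul (hdiff.comp hφ.tendsto_atTop)).div hval
      hpos.ne'
    rwa [mul_zero, zero_div] at h
  have hνφ : Tendsto (fun j => ‖ν (φ j)‖) atTop (𝓝 0) := by
    refine squeeze_zero' (Eventually.of_forall fun j => norm_nonneg _) ?_ hbound
    filter_upwards [hval.eventually (lt_mem_nhds hpos)] with j hj
    rw [le_div_iff₀ hj, mul_comm]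
    exact hνle (φ j)
  exact le_of_tendsto_of_isSubgradAt hF (fun j => hνsub (φ j)) hxφ
    (tendsto_zero_iff_norm_tendsto_zero.mpr hνφ) y

end IsAlgSeq

theorem stmt8_general
    {n m : ℕ} [NeZero m] (f : Fin m → Euc n → ℝ)
    (M : ℝ) (x : ℕ → Euc n) (lam : ℕ → ℝ)
    (halg : IsAlgSeq f M x lam)
    (hnosol : ∀ y : Euc n, 0 < envl f y)
    (hstrict : StrictConvexOn ℝ Set.univ (envl f))
    (hbdd : ∃ C : ℝ, ∀ k : ℕ, ‖x k‖ ≤ C)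
    (hdiff : Tendsto (fun k => ‖x (k + 1) - x k‖) atTop (𝓝 0)) :
    ∃ xs : Euc n, (∀ y : Euc n, envl f xs ≤ envl f y) ∧
      (∀ y : Euc n, (∀ z : Euc n, envl f y ≤ envl f z) → y = xs) ∧
      Tendsto x atTop (𝓝 xs) ∧
      Tendsto (fun k => envl f (x k)) atTop (𝓝 (⨅ y : Euc n, envl f y)) := by
  obtain ⟨C, hC⟩ := hbdd
  have hF : Continuous (envl f) :=
    continuousOn_univ.mp (hstrict.convexOn.continuousOn isOpen_univ)
  have hK : IsCompact (Metric.closedBall (0 : Euc n) C) := isCompact_closedBall 0 C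
  have hmem : ∀ᶠ k in atTop, x k ∈ Metric.closedBall 0 C :=
    Eventually.of_forall fun k => mem_closedBall_zero_iff.mpr (hC k)
  obtain ⟨a, -, ha⟩ := hK.exists_mapClusterPt (tendsto_principal.mpr hmem)
  have hmin := halg.isMin_of_mapClusterPt hF hdiff ha (hnosol a)
  have huniq : ∀ y, (∀ z, envl f y ≤ envl f z) → y = a := fun y hy =>
    hstrict.eq_of_isMinOn (isMinOn_univ_iff.mpr hy) (isMinOn_univ_iff.mpr hmin)
      (Set.mem_univ y) (Set.mem_univ a)
  have hxa : Tendsto x atTop (𝓝 a) := hK.tendsto_nhds_of_unique_mapClusterPt hmem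
    fun b _ hb => huniq b (halg.isMin_of_mapClusterPt hF hdiff hb (hnosol b))
  refine ⟨a, hmin, huniq, hxa, ?_⟩
  rw [ciInf_eq_of_forall_ge_of_forall_gt_exists_lt hmin fun w hw => ⟨a, hw⟩]
  exact (hF.tendsto a).comp hxa

theorem stmt8
    {n m : ℕ} (hn : 0 < n) [NeZero m] (f : Fin m → Euc n → ℝ)
    (hconv : ∀ i, ConvexOn ℝ Set.univ (f i))
    (M : ℝ) (hM : 0 < M) (x : ℕ → Euc n) (lam : ℕ → ℝ)
    (halg : IsAlgSeq f M x lam) (x0 : Euc n) (hx0 : x 0 = x0)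
    (hnosol : ∀ y : Euc n, 0 < envl f y)
    (hstrict : StrictConvexOn ℝ Set.univ (envl f))
    (hbdd : ∃ C : ℝ, ∀ k : ℕ, ‖x k‖ ≤ C)
    (hdiff : Tendsto (fun k => ‖x (k + 1) - x k‖) atTop (𝓝 0)) :
    ∃ xs : Euc n, (∀ y : Euc n, envl f xs ≤ envl f y) ∧
      (∀ y : Euc n, (∀ z : Euc n, envl f y ≤ envl f z) → y = xs) ∧
      Tendsto x atTop (𝓝 xs) ∧
      Tendsto (fun k => envl f (x k)) atTop (𝓝 (⨅ y : Euc n, envl f y)) :=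
  stmt8_general f M x lam halg hnosol hstrict hbdd hdiff
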